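/- In a uniform metric space on k+1 points (all pairwise distances equal to 1), for any deterministic sequence of center placements F_1,…,F_T ⊆ V with |F_t| = k, there exists a sequence of single-client requests R_1,…,R_T (each |R_t| = 1) such that the algorithm's total connection cost is T, while some static solution F* with |F*| = k has total cost at most T/(k+1). Consequently no deterministic algorithm has regret better than k+1 on this instance. -/
import Mathlib


/-- In a uniform metric space on `k+1` points (all pairwise distances 1),
for any deterministic sequence of center placements `F_1,…,F_T` with `|F_t| = k`, there
is a sequence of single-client requests whose total connection cost is `T`, while some
static solution `F*` with `|F*| = k` has total cost at most `T/(k+1)`.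
(The connection cost of a single client `j` to a nonempty center set `F` in the uniform
metric is `0` if `j ∈ F` and `1` otherwise.) -/
theorem stmt1 (k T : ℕ) (hk : 0 < k)
    (F : Fin T → Finset (Fin (k + 1))) (hF : ∀ t, (F t).card = k) :
    ∃ r : Fin T → Fin (k + 1),
      (∑ t, (if r t ∈ F t then (0 : ℝ) else 1)) = T ∧
      ∃ Fstar : Finset (Fin (k + 1)), Fstar.card = k ∧
        (∑ t, (if r t ∈ Fstar then (0 : ℝ) else 1)) ≤ (T : ℝ) / (k + 1) := by
  -- choose r t outside F t
  have hne : ∀ t, ((F t)ᶜ : Finset (Fin (k + 1))).Nonempty := by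
    intro t
    rw [← Finset.card_pos, Finset.card_compl, hF]
    simp [Fintype.card_fin]
  choose r hr using fun t => (hne t).exists_mem
  have hrF : ∀ t, r t ∉ F t := fun t => Finset.mem_compl.mp (hr t)
  refine ⟨r, ?_, ?_⟩
  · rw [Finset.sum_congr rfl (fun t _ => if_neg (hrF t))]
    simp
  · -- counting function
    set c : Fin (k + 1) → ℕ := fun j => (Finset.univ.filter (fun t => r t = j)).card with hc
    have hsum : ∑ j, c j = T := by
      rw [hc]
      rw [← Finset.card_eq_sum_card_fiberwise (f := r) (fun t _ => Finset.mem_univ (r t))]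
      simp
    obtain ⟨j₀, _, hj₀⟩ := Finset.exists_min_image Finset.univ c Finset.univ_nonempty
    have hmin : (k + 1) * c j₀ ≤ T := by
      calc (k + 1) * c j₀ = ∑ _j : Fin (k + 1), c j₀ := by
            simp [Finset.sum_const, Fintype.card_fin, mul_comm]
        _ ≤ ∑ j, c j := Finset.sum_le_sum (fun j _ => hj₀ j (Finset.mem_univ j))
        _ = T := hsum
    refine ⟨{j₀}ᶜ, ?_, ?_⟩
    · rw [Finset.card_compl]; simp [Fintype.card_fin]
    · have heq : (∑ t, (if r t ∈ ({j₀}ᶜ : Finset (Fin (k + 1))) then (0 : ℝ) else 1)) = c j₀ := by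
        calc (∑ t, (if r t ∈ ({j₀}ᶜ : Finset (Fin (k + 1))) then (0 : ℝ) else 1))
            = ∑ t, (if r t = j₀ then (1 : ℝ) else 0) :=
              Finset.sum_congr rfl (fun t _ => by by_cases h : r t = j₀ <;> simp [h])
          _ = c j₀ := by rw [Finset.sum_boole]
      rw [heq, le_div_iff₀ (by positivity)]
      calc (c j₀ : ℝ) * (k + 1) = ((k + 1) * c j₀ : ℕ) := by push_cast; ring
        _ ≤ T := by exact_mod_cast hmin
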